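/- arXiv:2006.01350 — 3 statements merged into one kernel-verified Lean document; each statement's English description precedes it below -/
import Mathlib

section
/- Let (μ_i)_{i≥1} be a nonincreasing sequence of positive reals with μ_i ≤ C i^(−2α) for constants C > 0 and α > m + 1/2 where m is a nonnegative integer, and let λ ∈ (0,1]. Then the series ∑_{i=1}^∞ (μ_i/(λ+μ_i)) · i^(2m) converges and is bounded above by a constant (depending only on C, α, m) times λ^(−(2m+1)/(2α)). -/
/-!
Each term is at most `min ((i+1)^(2m), (C/λ) (i+1)^(2m-2α))`. With `T = (C/λ)^(1/(2α))`, split the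
series at `N = ⌈T⌉`: the first `N` terms contribute at most `N^(2m+1)`, and the tail is bounded by
the integral `∫_N^∞ T^(2α) x^(2m-2α) dx ≤ T^(2m+1) / (2α-2m-1)`. Since `λ ≤ 1` we have
`T ≥ C^(1/(2α))`, hence `N ≤ T + 1 ≤ (1 + C^(-1/(2α))) T`, and `T^(2m+1) = C^q λ^(-q)` with
`q = (2m+1)/(2α)`.
-/

open Real Finset

lemma tsum_rpow_neg_nat_add_le {s : ℝ} (hs : 1 < s) {N : ℕ} (hN : 0 < N) :
    ∑' i : ℕ, ((i + N + 1 : ℕ) : ℝ) ^ (-s) ≤ (N : ℝ) ^ (1 - s) / (s - 1) := by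
  have hN' : (0 : ℝ) < N := Nat.cast_pos.mpr hN
  calc ∑' i : ℕ, ((i + N + 1 : ℕ) : ℝ) ^ (-s)
      ≤ ∫ x in Set.Ioi (N : ℝ), x ^ (-s) :=
        ((antitoneOn_rpow_Ioi_of_exponent_nonpos (by linarith)).mono
            fun x hx => hN'.trans_le hx).tsum_comp_add_le_integral N
          (integrableOn_Ioi_rpow_of_lt (by linarith) hN')
          fun x hx => (rpow_pos_of_pos (hN'.trans hx) _).le
    _ = (N : ℝ) ^ (1 - s) / (s - 1) := by
        rw [integral_Ioi_rpow_of_lt (by linarith) hN', neg_add_eq_sub, neg_div, ← div_neg,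
          neg_sub]

section DecayingTerms

variable {a : ℕ → ℝ} {K s : ℝ}

lemma summable_of_le_rpow_neg (hs : 1 < s) (h0 : ∀ i, 0 ≤ a i)
    (ha : ∀ i, a i ≤ K * ((i : ℝ) + 1) ^ (-s)) : Summable a := by
  have hsum : Summable fun i : ℕ => ((i + 1 : ℕ) : ℝ) ^ (-s) :=
    (summable_nat_add_iff 1).mpr (summable_nat_rpow.mpr (by linarith))
  refine .of_nonneg_of_le h0 (fun i => ?_) (hsum.mul_left K)
  exact_mod_cast ha i

lemma tsum_nat_add_le_of_le_rpow_neg (hs : 1 < s) (h0 : ∀ i, 0 ≤ a i)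
    (ha : ∀ i, a i ≤ K * ((i : ℝ) + 1) ^ (-s)) {N : ℕ} (hN : 0 < N) :
    ∑' i, a (i + N) ≤ K * ((N : ℝ) ^ (1 - s) / (s - 1)) := by
  have hK : 0 ≤ K := by simpa using (h0 0).trans (ha 0)
  calc ∑' i, a (i + N) ≤ ∑' i : ℕ, K * ((i + N + 1 : ℕ) : ℝ) ^ (-s) := by
        refine Summable.tsum_le_tsum (fun i => ?_)
          ((summable_nat_add_iff N).mpr (summable_of_le_rpow_neg hs h0 ha)) ?_
        · exact_mod_cast ha (i + N)
        · exact ((summable_nat_add_iff (N + 1)).mpr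
            (summable_nat_rpow.mpr (by linarith))).mul_left K
    _ = K * ∑' i : ℕ, ((i + N + 1 : ℕ) : ℝ) ^ (-s) := tsum_mul_left
    _ ≤ K * ((N : ℝ) ^ (1 - s) / (s - 1)) :=
        mul_le_mul_of_nonneg_left (tsum_rpow_neg_nat_add_le hs hN) hK

end DecayingTerms

lemma sum_range_le_rpow_add_one {a : ℕ → ℝ} {p : ℝ} (hp : 0 ≤ p)
    (ha : ∀ i, a i ≤ ((i : ℝ) + 1) ^ p) (N : ℕ) :
    ∑ i ∈ range N, a i ≤ (N : ℝ) ^ (p + 1) := by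
  calc ∑ i ∈ range N, a i ≤ ∑ _i ∈ range N, (N : ℝ) ^ p := by
        refine sum_le_sum fun i hi => (ha i).trans (rpow_le_rpow (by positivity) ?_ hp)
        exact_mod_cast mem_range.mp hi
    _ = (N : ℝ) ^ (p + 1) := by
        rw [sum_const, card_range, nsmul_eq_mul, rpow_add_one' (Nat.cast_nonneg N) (by linarith),
          mul_comm]

theorem tsum_le_of_le_rpow_of_le_rpow_neg {a : ℕ → ℝ} {p s c T : ℝ} (hp : 0 ≤ p) (hs : 1 < s)
    (hc : 0 < c) (hcT : c ≤ T) (h0 : ∀ i, 0 ≤ a i) (hpow : ∀ i, a i ≤ ((i : ℝ) + 1) ^ p)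
    (hdecay : ∀ i, a i ≤ T ^ (p + s) * ((i : ℝ) + 1) ^ (-s)) :
    ∑' i, a i ≤ ((1 + c⁻¹) ^ (p + 1) + (s - 1)⁻¹) * T ^ (p + 1) := by
  have hT : 0 < T := hc.trans_le hcT
  set N := ⌈T⌉₊
  have hN : 0 < N := Nat.ceil_pos.mpr hT
  have hTN : T ≤ N := Nat.le_ceil T
  have hNT : (N : ℝ) ≤ (1 + c⁻¹) * T := by
    have : 1 ≤ c⁻¹ * T := by rwa [← div_eq_inv_mul, one_le_div hc]
    linarith [Nat.ceil_lt_add_one hT.le]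
  calc ∑' i, a i = ∑ i ∈ range N, a i + ∑' i, a (i + N) :=
        ((summable_of_le_rpow_neg hs h0 hdecay).sum_add_tsum_nat_add N).symm
    _ ≤ (N : ℝ) ^ (p + 1) + T ^ (p + s) * ((N : ℝ) ^ (1 - s) / (s - 1)) :=
        add_le_add (sum_range_le_rpow_add_one hp hpow N)
          (tsum_nat_add_le_of_le_rpow_neg hs h0 hdecay hN)
    _ ≤ ((1 + c⁻¹) * T) ^ (p + 1) + T ^ (p + s) * (T ^ (1 - s) / (s - 1)) := by
        have hs' : 0 < s - 1 := by linarith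
        gcongr ?_ ^ _ + _ * (?_ / _)
        exact rpow_le_rpow_of_nonpos hT hTN (by linarith)
    _ = ((1 + c⁻¹) ^ (p + 1) + (s - 1)⁻¹) * T ^ (p + 1) := by
        rw [mul_rpow (by positivity) hT.le, mul_div_assoc', ← rpow_add hT]
        ring_nf

lemma div_add_mul_rpow_le {μ lam C x β p : ℝ} (hμ : 0 < μ) (hlam : 0 < lam) (hx : 0 < x)
    (hμC : μ ≤ C * x ^ (-β)) :
    μ / (lam + μ) * x ^ p ≤ x ^ p ∧ μ / (lam + μ) * x ^ p ≤ C / lam * x ^ (-(β - p)) := by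
  refine ⟨mul_le_of_le_one_left (by positivity)
    (div_le_one_of_le₀ (by linarith) (by linarith)), ?_⟩
  calc μ / (lam + μ) * x ^ p ≤ C * x ^ (-β) / lam * x ^ p := by
        gcongr ?_ * _
        exact (div_le_div_of_nonneg_left hμ.le hlam (le_add_of_nonneg_right hμ.le)).trans
          (div_le_div_of_nonneg_right hμC hlam.le)
    _ = C / lam * x ^ (-(β - p)) := by
        rw [neg_sub, sub_eq_neg_add, rpow_add hx]
        ring

lemma div_rpow_inv_rpow {C lam r t : ℝ} (hC : 0 < C) (hlam : 0 < lam) :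
    ((C / lam) ^ r⁻¹) ^ t = C ^ (t / r) * lam ^ (-t / r) := by
  rw [← rpow_mul (div_pos hC hlam).le, div_rpow hC.le hlam.le, div_eq_mul_inv,
    ← rpow_neg hlam.le, inv_mul_eq_div, neg_div]

/-- Upper bound on the high-order effective dimension
`∑ (μ_i/(λ+μ_i)) i^{2m} ≲ λ^{-(2m+1)/(2α)}` for polynomially decaying eigenvalues. -/
theorem stmt2 (C α : ℝ) (m : ℕ) (hC : 0 < C) (hα : (m : ℝ) + 1 / 2 < α) :
    ∃ C' > 0, ∀ (μ : ℕ → ℝ) (lam : ℝ),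
      (∀ i : ℕ, 1 ≤ i → 0 < μ i) →
      (∀ i j : ℕ, 1 ≤ i → i ≤ j → μ j ≤ μ i) →
      (∀ i : ℕ, 1 ≤ i → μ i ≤ C * (i : ℝ) ^ (-(2 * α))) →
      0 < lam → lam ≤ 1 →
      Summable (fun i : ℕ => μ (i + 1) / (lam + μ (i + 1)) * ((i : ℝ) + 1) ^ (2 * m)) ∧
      (∑' i : ℕ, μ (i + 1) / (lam + μ (i + 1)) * ((i : ℝ) + 1) ^ (2 * m)) ≤
        C' * lam ^ (-(2 * (m : ℝ) + 1) / (2 * α)) := by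
  have hα0 : 0 < α := by linarith [m.cast_nonneg (α := ℝ)]
  set c := C ^ (2 * α)⁻¹
  set s := 2 * α - 2 * m
  have hs : 1 < s := by linarith
  have hc : 0 < c := rpow_pos_of_pos hC _
  refine ⟨((1 + c⁻¹) ^ (2 * (m : ℝ) + 1) + (s - 1)⁻¹) * C ^ ((2 * (m : ℝ) + 1) / (2 * α)),
    by have : 0 < s - 1 := by linarith
       positivity, fun μ lam hpos _ hμ hlam hlam1 => ?_⟩
  set T := (C / lam) ^ (2 * α)⁻¹
  have hTα : T ^ (2 * (m : ℝ) + s) = C / lam := by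
    rw [← rpow_mul (div_pos hC hlam).le, show 2 * (m : ℝ) + s = 2 * α by ring,
      inv_mul_cancel₀ (by linarith), rpow_one]
  have hcT : c ≤ T := rpow_le_rpow hC.le (le_div_self hC.le hlam hlam1) (by positivity)
  have hterm (i : ℕ) := div_add_mul_rpow_le (x := (i : ℝ) + 1) (β := 2 * α) (p := 2 * (m : ℝ))
    (hpos _ i.succ_pos) hlam (by positivity) (by exact_mod_cast hμ (i + 1) i.succ_pos)
  have hpow (i : ℕ) : ((i : ℝ) + 1) ^ (2 * m) = ((i : ℝ) + 1) ^ (2 * (m : ℝ)) := by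
    rw [← rpow_natCast]; push_cast; rfl
  simp only [hpow, ← hTα] at hterm ⊢
  have h0 (i : ℕ) : 0 ≤ μ (i + 1) / (lam + μ (i + 1)) * ((i : ℝ) + 1) ^ (2 * (m : ℝ)) := by
    have := hpos _ i.succ_pos; positivity
  refine ⟨summable_of_le_rpow_neg hs h0 fun i => (hterm i).2, ?_⟩
  calc _ ≤ ((1 + c⁻¹) ^ (2 * (m : ℝ) + 1) + (s - 1)⁻¹) * T ^ (2 * (m : ℝ) + 1) :=
        tsum_le_of_le_rpow_of_le_rpow_neg (by positivity) hs hc hcT h0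
          (fun i => (hterm i).1) fun i => (hterm i).2
    _ = _ := by rw [div_rpow_inv_rpow hC hlam]; ring_nf
end

section
/- Let (μ_i)_{i≥1} be positive reals with μ_i ≥ c i^(−2α) for constants c > 0 and α > m + 1/2, m a nonnegative integer, and let λ ∈ (0,1]. Then ∑_{i=1}^∞ (μ_i/(λ+μ_i)) · i^(2m) ≥ c' λ^(−(2m+1)/(2α)) for some constant c' > 0 depending only on c, α, m. -/
open Real Finset

/-!
Below the threshold `T = λ^(-1/(2α))` one has `μ_i ≥ c i^(-2α) ≥ c λ`, so each ratio
`μ_i / (λ + μ_i)` is at least `c / (1 + c)`. Hence the partial sum up to `⌊T⌋` dominates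
`c / (1 + c) · ∑_{i ≤ ⌊T⌋} i^(2m)`, which by comparison with `∫₀^⌊T⌋ x^(2m) dx` is at least
`c / (1 + c) · ⌊T⌋^(2m+1) / (2m+1)`; finally `⌊T⌋ ≥ T / 2`
because `T ≥ 1`.
-/

lemma div_one_add_le_div_add {c lam μ : ℝ} (hc : 0 ≤ c) (hlam : 0 < lam) (h : c * lam ≤ μ) :
    c / (1 + c) ≤ μ / (lam + μ) := by
  have hμ : 0 < lam + μ := by nlinarith
  rw [div_le_div_iff₀ (by linarith) hμ]
  nlinarith

lemma le_rpow_neg_of_le_rpow_neg_inv {lam p x : ℝ} (hlam : 0 < lam) (hp : 0 < p) (hx : 0 < x)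
    (h : x ≤ lam ^ (-1 / p)) : lam ≤ x ^ (-p) := by
  calc lam = (lam ^ (-1 / p)) ^ (-p) := by
        rw [← rpow_mul hlam.le, div_mul_eq_mul_div, neg_mul_neg, one_mul, div_self hp.ne', rpow_one]
    _ ≤ x ^ (-p) := rpow_le_rpow_of_nonpos hx h (by linarith)

lemma div_one_add_le_div_add_of_le_rpow_neg_inv {c lam p x μ : ℝ} (hc : 0 ≤ c) (hlam : 0 < lam)
    (hp : 0 < p) (hx : 0 < x) (hxT : x ≤ lam ^ (-1 / p)) (hμ : c * x ^ (-p) ≤ μ) :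
    c / (1 + c) ≤ μ / (lam + μ) :=
  div_one_add_le_div_add hc hlam <|
    (mul_le_mul_of_nonneg_left (le_rpow_neg_of_le_rpow_neg_inv hlam hp hx hxT) hc).trans hμ

lemma rpow_neg_natCast_div {lam : ℝ} (hlam : 0 ≤ lam) (n : ℕ) (p : ℝ) :
    lam ^ (-(n : ℝ) / p) = (lam ^ (-1 / p)) ^ n := by
  rw [← rpow_natCast, ← rpow_mul hlam]
  congr 1
  ring

lemma le_two_mul_natFloor {T : ℝ} (hT : 1 ≤ T) : T ≤ 2 * ⌊T⌋₊ := by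
  have h1 : (1 : ℝ) ≤ ⌊T⌋₊ := by exact_mod_cast Nat.one_le_floor_iff T |>.mpr hT
  linarith [Nat.lt_floor_add_one T]

lemma pow_succ_div_le_sum_range_pow (k n : ℕ) :
    (n : ℝ) ^ (k + 1) / (k + 1) ≤ ∑ i ∈ range n, ((i : ℝ) + 1) ^ k := by
  have h := MonotoneOn.integral_le_sum (x₀ := 0) (a := n) (f := fun x : ℝ ↦ x ^ k)
    (pow_left_monotoneOn.mono Set.Icc_subset_Ici_self)
  simpa [integral_pow, add_comm] using h

lemma div_two_pow_succ_div_le_sum_range_natFloor_pow {T : ℝ} (hT : 1 ≤ T) (k : ℕ) :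
    (T / 2) ^ (k + 1) / (k + 1) ≤ ∑ i ∈ range ⌊T⌋₊, ((i : ℝ) + 1) ^ k := by
  refine le_trans ?_ (pow_succ_div_le_sum_range_pow k ⌊T⌋₊)
  gcongr
  linarith [le_two_mul_natFloor hT]

/-- Lower bound on the high-order effective dimension: the (possibly infinite) sum
`∑ (μ_i/(λ+μ_i)) i^{2m}` is at least `c' λ^{-(2m+1)/(2α)}`, witnessed by a partial sum. -/
theorem stmt3 (c α : ℝ) (m : ℕ) (hc : 0 < c) (hα : (m : ℝ) + 1 / 2 < α) :
    ∃ c' > 0, ∀ (μ : ℕ → ℝ) (lam : ℝ),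
      (∀ i : ℕ, 1 ≤ i → 0 < μ i) →
      (∀ i : ℕ, 1 ≤ i → c * (i : ℝ) ^ (-(2 * α)) ≤ μ i) →
      0 < lam → lam ≤ 1 →
      ∃ n : ℕ, c' * lam ^ (-(2 * (m : ℝ) + 1) / (2 * α)) ≤
        ∑ i ∈ Finset.range n, μ (i + 1) / (lam + μ (i + 1)) * ((i : ℝ) + 1) ^ (2 * m) := by
  have hp : 0 < 2 * α := by linarith [(m.cast_nonneg : (0 : ℝ) ≤ m)]
  refine ⟨c / ((1 + c) * (2 * m + 1) * 2 ^ (2 * m + 1)), by positivity, ?_⟩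
  intro μ lam _ hμ hlam0 hlam1
  set T := lam ^ (-1 / (2 * α))
  have hT : 1 ≤ T := one_le_rpow_of_pos_of_le_one_of_nonpos hlam0 hlam1
    (div_nonpos_of_nonpos_of_nonneg (by norm_num) hp.le)
  refine ⟨⌊T⌋₊, ?_⟩
  have hterm : ∀ i ∈ range ⌊T⌋₊, c / (1 + c) * ((i : ℝ) + 1) ^ (2 * m) ≤
      μ (i + 1) / (lam + μ (i + 1)) * ((i : ℝ) + 1) ^ (2 * m) := by
    intro i hi
    have hiT : (i : ℝ) + 1 ≤ T := by
      exact_mod_cast (Nat.le_floor_iff (by linarith)).mp (mem_range.mp hi)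
    refine mul_le_mul_of_nonneg_right ?_ (by positivity)
    exact div_one_add_le_div_add_of_le_rpow_neg_inv hc.le hlam0 hp (by positivity) hiT
      (by exact_mod_cast hμ (i + 1) (by omega))
  have hpow : lam ^ (-(2 * (m : ℝ) + 1) / (2 * α)) = T ^ (2 * m + 1) := by
    rw [show 2 * (m : ℝ) + 1 = ((2 * m + 1 : ℕ) : ℝ) by push_cast; ring,
      rpow_neg_natCast_div hlam0.le]
  calc c / ((1 + c) * (2 * m + 1) * 2 ^ (2 * m + 1)) * lam ^ (-(2 * (m : ℝ) + 1) / (2 * α))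
      = c / (1 + c) * ((T / 2) ^ (2 * m + 1) / ((2 * m : ℕ) + 1)) := by
        rw [hpow, div_pow]; push_cast; field_simp
    _ ≤ c / (1 + c) * ∑ i ∈ range ⌊T⌋₊, ((i : ℝ) + 1) ^ (2 * m) := by
        gcongr; exact div_two_pow_succ_div_le_sum_range_natFloor_pow hT (2 * m)
    _ ≤ _ := by rw [mul_sum]; exact sum_le_sum hterm
end

section
/- Let (μ_i)_{i≥1} be a nonincreasing positive sequence tending to 0, and let f₀ = ∑_i f_i ψ_i in an L² space with orthonormal basis (ψ_i). For λ > 0 and 0 < r ≤ 1/2, suppose g := ∑_i (f_i / μ_i^{r+1/2}) ψ_i has ‖g‖₂ < ∞. Define f_λ = ∑_i (μ_i/(μ_i+λ)) f_i ψ_i. Then ∑_i ((λ/(μ_i+λ)) f_i)² / μ_i ≤ λ^{2r} ‖g‖₂². -/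
/-!
Coordinatewise, writing `f_i = g_i μ_i^{r+1/2}`, the claim reduces to
`λ² μ^{2r} ≤ λ^{2r} (μ + λ)²`, i.e. `λ^{2-2r} μ^{2r} ≤ (μ + λ)^{2-2r} (μ + λ)^{2r}`,
which holds factor by factor because `0 ≤ 2r ≤ 2`.
-/

open Real

theorem rpow_sub_mul_rpow_le_add_rpow {a b p t : ℝ} (ha : 0 ≤ a) (hb : 0 ≤ b)
    (ht : 0 ≤ t) (htp : t ≤ p) : a ^ (p - t) * b ^ t ≤ (a + b) ^ p := by
  calc a ^ (p - t) * b ^ t ≤ (a + b) ^ (p - t) * (a + b) ^ t := by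
        gcongr <;> linarith
    _ = (a + b) ^ p := by
        rw [← rpow_add_of_nonneg (by positivity) (by linarith) ht, sub_add_cancel]

theorem rpow_add_half_sq {m : ℝ} (hm : 0 < m) (r : ℝ) :
    (m ^ (r + 1 / 2)) ^ 2 = m ^ (2 * r) * m := by
  rw [← rpow_natCast, ← rpow_mul hm.le, ← rpow_add_one hm.ne']
  ring_nf

theorem sq_div_le_rpow_mul_sq_div_rpow {m lam r : ℝ} (hm : 0 < m) (hlam : 0 < lam)
    (hr0 : 0 ≤ r) (hr : r ≤ 1) (f : ℝ) :
    (lam / (m + lam) * f) ^ 2 / m ≤ lam ^ (2 * r) * (f / m ^ (r + 1 / 2)) ^ 2 := by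
  have hfactor : lam ^ (2 - 2 * r) * m ^ (2 * r) ≤ (m + lam) ^ 2 := by
    simpa [add_comm] using rpow_sub_mul_rpow_le_add_rpow (p := 2) hlam.le hm.le
      (by positivity) (by linarith)
  have hlam_sq : lam ^ 2 = lam ^ (2 * r) * lam ^ (2 - 2 * r) := by
    rw [← rpow_add hlam, add_sub_cancel, rpow_two]
  calc (lam / (m + lam) * f) ^ 2 / m
      = lam ^ (2 * r) * (f / m ^ (r + 1 / 2)) ^ 2
          * (lam ^ (2 - 2 * r) * m ^ (2 * r) / (m + lam) ^ 2) := by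
        rw [div_pow f, rpow_add_half_sq hm, mul_pow, div_pow lam, hlam_sq]
        field_simp
    _ ≤ lam ^ (2 * r) * (f / m ^ (r + 1 / 2)) ^ 2 := by
        refine mul_le_of_le_one_right (by positivity) ?_
        exact div_le_one_of_le₀ hfactor (by positivity)

theorem stmt7_general (μ f : ℕ → ℝ) (hpos : ∀ i, 0 < μ i)
    (lam r : ℝ) (hlam : 0 < lam) (hr0 : 0 < r) (hr : r ≤ 1 / 2)
    (g : ℕ → ℝ) (hg : ∀ i, g i = f i / μ i ^ (r + 1 / 2))
    (hgsum : Summable (fun i => (g i) ^ 2)) :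
    Summable (fun i => (lam / (μ i + lam) * f i) ^ 2 / μ i) ∧
    (∑' i, (lam / (μ i + lam) * f i) ^ 2 / μ i) ≤ lam ^ (2 * r) * ∑' i, (g i) ^ 2 := by
  have hle : ∀ i, (lam / (μ i + lam) * f i) ^ 2 / μ i ≤ lam ^ (2 * r) * g i ^ 2 := fun i =>
    hg i ▸ sq_div_le_rpow_mul_sq_div_rpow (hpos i) hlam hr0.le (by linarith) (f i)
  have hsum : Summable (fun i => (lam / (μ i + lam) * f i) ^ 2 / μ i) :=
    (hgsum.mul_left _).of_nonneg_of_le (fun i => div_nonneg (sq_nonneg _) (hpos i).le) hle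
  refine ⟨hsum, ?_⟩
  rw [← tsum_mul_left]
  exact hsum.tsum_le_tsum hle (hgsum.mul_left _)

/-- RKHS-norm bias bound `‖f_λ - f₀‖²_H ≤ λ^{2r} ‖L_K^{-r-1/2} f₀‖₂²` in sequence
space: with `g_i = f_i / μ_i^{r+1/2}` square-summable,
`∑ ((λ/(μ_i+λ)) f_i)² / μ_i ≤ λ^{2r} ∑ g_i²`. -/
theorem stmt7 (μ f : ℕ → ℝ) (hpos : ∀ i, 0 < μ i)
    (hmono : ∀ i j : ℕ, i ≤ j → μ j ≤ μ i)
    (hlim : Filter.Tendsto μ Filter.atTop (nhds 0))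
    (lam r : ℝ) (hlam : 0 < lam) (hr0 : 0 < r) (hr : r ≤ 1 / 2)
    (g : ℕ → ℝ) (hg : ∀ i, g i = f i / μ i ^ (r + 1 / 2))
    (hgsum : Summable (fun i => (g i) ^ 2)) :
    Summable (fun i => (lam / (μ i + lam) * f i) ^ 2 / μ i) ∧
    (∑' i, (lam / (μ i + lam) * f i) ^ 2 / μ i) ≤ lam ^ (2 * r) * ∑' i, (g i) ^ 2 :=
  stmt7_general μ f hpos lam r hlam hr0 hr g hg hgsum
end
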